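/- arXiv:2501.09122 — 4 statements merged into one kernel-verified Lean document; each statement's English description precedes it below -/
import Mathlib

section
/- Let (a_ℓ)_{ℓ∈ℕ₀} be a sequence of nonnegative reals. Suppose there exist constants 0 < ρ < 1 and C > 0 and a nonnegative sequence (b_ℓ) such that a_{ℓ+1}² ≤ ρ a_ℓ² + C b_ℓ² for all ℓ, and suppose the general quasi-orthogonality ∑_{j=ℓ}^{ℓ+n} b_j² ≤ C_qo² a_ℓ² holds for all ℓ, n ∈ ℕ₀. Then there exist constants C_lin ≥ 1 and 0 < ρ_lin < 1 such that a_{ℓ+j}² ≤ C_lin ρ_lin^j a_ℓ² for all j, ℓ ∈ ℕ₀. -/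
/-- Abstract linear convergence: estimator reduction up to a perturbation
together with general quasi-orthogonality imply linear convergence. -/
theorem linear_convergence_from_reduction_and_qo
    (a b : ℕ → ℝ) (ha : ∀ ℓ, 0 ≤ a ℓ) (hb : ∀ ℓ, 0 ≤ b ℓ)
    (ρ C Cqo : ℝ) (hρ0 : 0 < ρ) (hρ1 : ρ < 1) (hC : 0 < C)
    (hred : ∀ ℓ, a (ℓ + 1) ^ 2 ≤ ρ * a ℓ ^ 2 + C * b ℓ ^ 2)
    (hqo : ∀ ℓ n : ℕ, ∑ j ∈ Finset.Icc ℓ (ℓ + n), b j ^ 2 ≤ Cqo ^ 2 * a ℓ ^ 2) :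
    ∃ Clin ρlin : ℝ, 1 ≤ Clin ∧ 0 < ρlin ∧ ρlin < 1 ∧
      ∀ j ℓ : ℕ, a (ℓ + j) ^ 2 ≤ Clin * ρlin ^ j * a ℓ ^ 2 := by
  set M : ℝ := (1 + C * Cqo ^ 2) / (1 - ρ) with hMdef
  have h1ρ : 0 < 1 - ρ := by linarith
  have hnum : (1 : ℝ) ≤ 1 + C * Cqo ^ 2 := by nlinarith [sq_nonneg Cqo]
  have hM1 : 1 < M := by
    rw [hMdef, lt_div_iff₀ h1ρ]; nlinarith [sq_nonneg Cqo]
  have hM0 : 0 < M := by linarith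
  -- quasi-orthogonality in range form
  have hqo' : ∀ ℓ N : ℕ, ∑ k ∈ Finset.range N, b (ℓ + k) ^ 2 ≤ Cqo ^ 2 * a ℓ ^ 2 := by
    intro ℓ N
    cases N with
    | zero => simp; positivity
    | succ n =>
        have h := hqo ℓ n
        rw [← Finset.Ico_add_one_right_eq_Icc, Finset.sum_Ico_eq_sum_range,
          show ℓ + n + 1 - ℓ = n + 1 by omega] at h
        exact h
  -- uniform bound on partial sums of a²
  have hP : ∀ ℓ N : ℕ, ∑ k ∈ Finset.range N, a (ℓ + k) ^ 2 ≤ M * a ℓ ^ 2 := by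
    intro ℓ N
    cases N with
    | zero => simp; positivity
    | succ N =>
        set S : ℝ := ∑ k ∈ Finset.range (N + 1), a (ℓ + k) ^ 2 with hS
        have hsplit : S = (∑ k ∈ Finset.range N, a (ℓ + (k + 1)) ^ 2) + a (ℓ + 0) ^ 2 :=
          Finset.sum_range_succ' _ N
        have hterm : ∀ k, a (ℓ + (k + 1)) ^ 2 ≤ ρ * a (ℓ + k) ^ 2 + C * b (ℓ + k) ^ 2 := by
          intro k
          have := hred (ℓ + k)
          simpa [add_assoc] using this
        have hsum1 : (∑ k ∈ Finset.range N, a (ℓ + (k + 1)) ^ 2)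
            ≤ ρ * (∑ k ∈ Finset.range N, a (ℓ + k) ^ 2)
              + C * (∑ k ∈ Finset.range N, b (ℓ + k) ^ 2) := by
          rw [Finset.mul_sum, Finset.mul_sum, ← Finset.sum_add_distrib]
          exact Finset.sum_le_sum fun k _ => hterm k
        have hpre : (∑ k ∈ Finset.range N, a (ℓ + k) ^ 2) ≤ S := by
          rw [hS, Finset.sum_range_succ]
          nlinarith [sq_nonneg (a (ℓ + N))]
        have hbsum := hqo' ℓ N
        have hineq : S ≤ ρ * S + C * (Cqo ^ 2 * a ℓ ^ 2) + a ℓ ^ 2 := by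
          have h2 : ρ * (∑ k ∈ Finset.range N, a (ℓ + k) ^ 2) ≤ ρ * S :=
            mul_le_mul_of_nonneg_left hpre hρ0.le
          have h3 : C * (∑ k ∈ Finset.range N, b (ℓ + k) ^ 2) ≤ C * (Cqo ^ 2 * a ℓ ^ 2) :=
            mul_le_mul_of_nonneg_left hbsum hC.le
          simp only [add_zero] at hsplit
          linarith [hsum1]
        have hMcancel : M * (1 - ρ) = 1 + C * Cqo ^ 2 := by
          rw [hMdef]; field_simp
        nlinarith [hineq]
  -- summability of a²
  have hsum : Summable fun k => a k ^ 2 := by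
    apply summable_of_sum_range_le (c := M * a 0 ^ 2) (fun n => sq_nonneg _)
    intro n
    simpa using hP 0 n
  have hshift : ∀ ℓ, Summable fun k => a (ℓ + k) ^ 2 := by
    intro ℓ
    exact ((summable_nat_add_iff ℓ).2 hsum).congr fun k => by rw [add_comm]
  set T : ℕ → ℝ := fun ℓ => ∑' k, a (ℓ + k) ^ 2 with hT
  have hT0 : ∀ ℓ, 0 ≤ T ℓ := fun ℓ => tsum_nonneg fun k => sq_nonneg _
  have hTle : ∀ ℓ, T ℓ ≤ M * a ℓ ^ 2 := by
    intro ℓ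
    exact Real.tsum_le_of_sum_range_le (fun n => sq_nonneg _) (hP ℓ)
  have haT : ∀ ℓ, a ℓ ^ 2 ≤ T ℓ := by
    intro ℓ
    have := Summable.le_tsum (hshift ℓ) 0 fun i _ => sq_nonneg _
    simpa using this
  have hTrec : ∀ ℓ, T ℓ = a ℓ ^ 2 + T (ℓ + 1) := by
    intro ℓ
    have h := Summable.tsum_eq_zero_add (hshift ℓ)
    simp only [add_zero] at h
    show (∑' k, a (ℓ + k) ^ 2) = a ℓ ^ 2 + ∑' k, a (ℓ + 1 + k) ^ 2
    rw [h]
    congr 1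
    exact tsum_congr fun k => by rw [show ℓ + (k + 1) = ℓ + 1 + k by omega]
  set q : ℝ := 1 - 1 / M with hq
  have hq0 : 0 < q := by
    rw [hq]
    have : 1 / M < 1 := by rw [div_lt_one hM0]; exact hM1
    linarith
  have hq1 : q < 1 := by
    rw [hq]
    have : 0 < 1 / M := by positivity
    linarith
  have hstep : ∀ ℓ, T (ℓ + 1) ≤ q * T ℓ := by
    intro ℓ
    have h1 : (1 / M) * T ℓ ≤ a ℓ ^ 2 := by
      have := mul_le_mul_of_nonneg_left (hTle ℓ) (le_of_lt (show (0:ℝ) < 1 / M by positivity))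
      have hMne : M ≠ 0 := ne_of_gt hM0
      calc (1 / M) * T ℓ ≤ (1 / M) * (M * a ℓ ^ 2) := this
        _ = a ℓ ^ 2 := by field_simp
    have h2 := hTrec ℓ
    rw [hq]
    nlinarith
  have hiter : ∀ j ℓ, T (ℓ + j) ≤ q ^ j * T ℓ := by
    intro j
    induction j with
    | zero => intro ℓ; simp
    | succ n ih =>
        intro ℓ
        have h1 : T (ℓ + (n + 1)) = T ((ℓ + n) + 1) := by ring_nf
        rw [h1]
        calc T ((ℓ + n) + 1) ≤ q * T (ℓ + n) := hstep _
          _ ≤ q * (q ^ n * T ℓ) := mul_le_mul_of_nonneg_left (ih ℓ) hq0.le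
          _ = q ^ (n + 1) * T ℓ := by ring
  refine ⟨M, q, hM1.le, hq0, hq1, fun j ℓ => ?_⟩
  calc a (ℓ + j) ^ 2 ≤ T (ℓ + j) := haT _
    _ ≤ q ^ j * T ℓ := hiter j ℓ
    _ ≤ q ^ j * (M * a ℓ ^ 2) := mul_le_mul_of_nonneg_left (hTle ℓ) (pow_nonneg hq0.le j)
    _ = M * q ^ j * a ℓ ^ 2 := by ring
end

section
/- Let η : T ∪ T' → ℝ≥0 be error indicators on two triangulations, let S = T ∩ T' be the common elements, and suppose the stability estimate |(∑_{T∈S} η'(T)²)^{1/2} − (∑_{T∈S} η(T)²)^{1/2}| ≤ C_stab δ and the reduction estimate (∑_{T∈T'∖S} η'(T)²)^{1/2} ≤ ρ_red (∑_{T∈T∖S} η(T)²)^{1/2} + C_red δ hold for some δ ≥ 0 and 0 < ρ_red < 1. If moreover the Dörfler marking ∑_{T∈M} η(T)² ≥ θ ∑_{T∈T} η(T)² holds for some M ⊆ T ∖ S with parameter 0 < θ ≤ 1, then there exist 0 < q < 1 and C > 0, depending only on θ, ρ_red, C_stab, C_red, such that ∑_{T∈T'} η'(T)² ≤ q ∑_{T∈T}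 η(T)² + C δ². -/
/-- Young-type inequality `(u+v)^2 ≤ (1+ε)u² + (1+1/ε)v²`. -/
lemma young_sq (ε u v : ℝ) (hε : 0 < ε) :
    (u + v) ^ 2 ≤ (1 + ε) * u ^ 2 + (1 + ε⁻¹) * v ^ 2 := by
  have hinv : ε * ε⁻¹ = 1 := mul_inv_cancel₀ hε.ne'
  have key : ε * ((u + v) ^ 2) ≤ ε * ((1 + ε) * u ^ 2 + (1 + ε⁻¹) * v ^ 2) := by
    nlinarith [sq_nonneg (ε * u - v)]
  exact le_of_mul_le_mul_left key hε

set_option maxHeartbeats 1000000 in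
/-- Estimator reduction: stability on non-refined elements, reduction on
refined elements and Dörfler marking (with all marked elements refined)
yield contraction of the total estimator up to a perturbation `δ`. -/
theorem estimator_reduction
    (θ ρred Cstab Cred : ℝ)
    (hθ0 : 0 < θ) (hθ1 : θ ≤ 1) (hρ0 : 0 < ρred) (hρ1 : ρred < 1)
    (hCs : 0 ≤ Cstab) (hCr : 0 ≤ Cred) :
    ∃ q C : ℝ, 0 < q ∧ q < 1 ∧ 0 < C ∧
      ∀ (ι : Type) [DecidableEq ι] (T T' M : Finset ι) (η η' : ι → ℝ) (δ : ℝ),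
        (∀ i, 0 ≤ η i) → (∀ i, 0 ≤ η' i) → 0 ≤ δ →
        M ⊆ T \ (T ∩ T') →
        |Real.sqrt (∑ i ∈ T ∩ T', η' i ^ 2) -
            Real.sqrt (∑ i ∈ T ∩ T', η i ^ 2)| ≤ Cstab * δ →
        Real.sqrt (∑ i ∈ T' \ (T ∩ T'), η' i ^ 2) ≤
            ρred * Real.sqrt (∑ i ∈ T \ (T ∩ T'), η i ^ 2) + Cred * δ →
        θ * ∑ i ∈ T, η i ^ 2 ≤ ∑ i ∈ M, η i ^ 2 →
        ∑ i ∈ T', η' i ^ 2 ≤ q * ∑ i ∈ T, η i ^ 2 + C * δ ^ 2 := by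
  set κ : ℝ := 1 - (1 - ρred ^ 2) * θ with hκdef
  have hκ0 : 0 < κ := by
    rw [hκdef]; nlinarith [mul_pos (mul_pos hρ0 hρ0) hθ0]
  have hκ1 : κ < 1 := by
    rw [hκdef]; nlinarith [mul_pos hθ0 (show (0:ℝ) < 1 - ρred ^ 2 by nlinarith)]
  set ε : ℝ := (1 - κ) / (2 * κ) with hεdef
  have hε : 0 < ε := div_pos (by linarith) (by linarith)
  have hρsq : (0:ℝ) ≤ 1 - ρred ^ 2 := by nlinarith
  refine ⟨(1 + κ) / 2, (1 + ε⁻¹) * (Cstab ^ 2 + Cred ^ 2) + 1, by linarith, by linarith,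
    by positivity, ?_⟩
  intro ι _ T T' M η η' δ hη hη' hδ hM hstab hred hmark
  set S := T ∩ T' with hS
  have hsub' : S ⊆ T' := Finset.inter_subset_right
  have hsub : S ⊆ T := Finset.inter_subset_left
  have hsplit' : ∑ i ∈ T' \ S, η' i ^ 2 + ∑ i ∈ S, η' i ^ 2 = ∑ i ∈ T', η' i ^ 2 :=
    Finset.sum_sdiff hsub'
  have hsplit : ∑ i ∈ T \ S, η i ^ 2 + ∑ i ∈ S, η i ^ 2 = ∑ i ∈ T, η i ^ 2 :=
    Finset.sum_sdiff hsub
  have nn1 : (0:ℝ) ≤ ∑ i ∈ S, η' i ^ 2 := Finset.sum_nonneg fun i _ => sq_nonneg _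
  have nn2 : (0:ℝ) ≤ ∑ i ∈ S, η i ^ 2 := Finset.sum_nonneg fun i _ => sq_nonneg _
  have nn3 : (0:ℝ) ≤ ∑ i ∈ T' \ S, η' i ^ 2 := Finset.sum_nonneg fun i _ => sq_nonneg _
  have nn4 : (0:ℝ) ≤ ∑ i ∈ T \ S, η i ^ 2 := Finset.sum_nonneg fun i _ => sq_nonneg _
  set a := Real.sqrt (∑ i ∈ S, η' i ^ 2) with hadef
  set b := Real.sqrt (∑ i ∈ S, η i ^ 2) with hbdef
  set y := Real.sqrt (∑ i ∈ T' \ S, η' i ^ 2) with hydef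
  set x := Real.sqrt (∑ i ∈ T \ S, η i ^ 2) with hxdef
  have ha2 : a ^ 2 = ∑ i ∈ S, η' i ^ 2 := Real.sq_sqrt nn1
  have hb2 : b ^ 2 = ∑ i ∈ S, η i ^ 2 := Real.sq_sqrt nn2
  have hy2 : y ^ 2 = ∑ i ∈ T' \ S, η' i ^ 2 := Real.sq_sqrt nn3
  have hx2 : x ^ 2 = ∑ i ∈ T \ S, η i ^ 2 := Real.sq_sqrt nn4
  have ha : a ≤ b + Cstab * δ := by
    have := (abs_le.mp hstab).2
    linarith
  have hbCnn : 0 ≤ b + Cstab * δ := by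
    have : (0:ℝ) ≤ b := Real.sqrt_nonneg _
    positivity
  have key1 : a ^ 2 ≤ (1 + ε) * b ^ 2 + (1 + ε⁻¹) * (Cstab * δ) ^ 2 :=
    le_trans (pow_le_pow_left₀ (Real.sqrt_nonneg _) ha 2) (young_sq ε b (Cstab * δ) hε)
  have key2 : y ^ 2 ≤ (1 + ε) * (ρred * x) ^ 2 + (1 + ε⁻¹) * (Cred * δ) ^ 2 :=
    le_trans (pow_le_pow_left₀ (Real.sqrt_nonneg _) hred 2)
      (young_sq ε (ρred * x) (Cred * δ) hε)
  have hmark2 : θ * ∑ i ∈ T, η i ^ 2 ≤ x ^ 2 := by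
    have hMle : ∑ i ∈ M, η i ^ 2 ≤ ∑ i ∈ T \ S, η i ^ 2 :=
      Finset.sum_le_sum_of_subset_of_nonneg hM fun i _ _ => sq_nonneg _
    rw [hx2]; linarith
  have h2 : b ^ 2 + ρred ^ 2 * x ^ 2 ≤ κ * ∑ i ∈ T, η i ^ 2 := by
    have hbx : b ^ 2 + x ^ 2 = ∑ i ∈ T, η i ^ 2 := by rw [hb2, hx2]; linarith
    rw [hκdef]
    have h3 : (1 - ρred ^ 2) * (θ * ∑ i ∈ T, η i ^ 2) ≤ (1 - ρred ^ 2) * x ^ 2 :=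
      mul_le_mul_of_nonneg_left hmark2 hρsq
    linarith [h3, hbx]
  have hq : (1 + ε) * κ = (1 + κ) / 2 := by
    rw [hεdef]; field_simp; ring
  have hεinv : (0:ℝ) ≤ ε⁻¹ := by positivity
  have htot : ∑ i ∈ T', η' i ^ 2 = y ^ 2 + a ^ 2 := by rw [ha2, hy2]; linarith
  have hε1 : (0:ℝ) ≤ 1 + ε := by linarith
  calc ∑ i ∈ T', η' i ^ 2 = y ^ 2 + a ^ 2 := htot
    _ ≤ (1 + ε) * (b ^ 2 + ρred ^ 2 * x ^ 2) + (1 + ε⁻¹) * (Cstab ^ 2 + Cred ^ 2) * δ ^ 2 := by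
        have e2 : (ρred * x) ^ 2 = ρred ^ 2 * x ^ 2 := by ring
        have e1 : (Cstab * δ) ^ 2 = Cstab ^ 2 * δ ^ 2 := by ring
        have e3 : (Cred * δ) ^ 2 = Cred ^ 2 * δ ^ 2 := by ring
        rw [e1] at key1; rw [e2, e3] at key2
        have expand : (1 + ε) * (b ^ 2 + ρred ^ 2 * x ^ 2) + (1 + ε⁻¹) * (Cstab ^ 2 + Cred ^ 2) * δ ^ 2
            = ((1 + ε) * (ρred ^ 2 * x ^ 2) + (1 + ε⁻¹) * (Cred ^ 2 * δ ^ 2))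
              + ((1 + ε) * b ^ 2 + (1 + ε⁻¹) * (Cstab ^ 2 * δ ^ 2)) := by ring
        rw [expand]
        exact add_le_add key2 key1
    _ ≤ (1 + ε) * (κ * ∑ i ∈ T, η i ^ 2) + (1 + ε⁻¹) * (Cstab ^ 2 + Cred ^ 2) * δ ^ 2 := by
        exact add_le_add (mul_le_mul_of_nonneg_left h2 hε1) le_rfl
    _ ≤ (1 + κ) / 2 * ∑ i ∈ T, η i ^ 2 + ((1 + ε⁻¹) * (Cstab ^ 2 + Cred ^ 2) + 1) * δ ^ 2 := by
        have hδ2 : (0:ℝ) ≤ δ ^ 2 := sq_nonneg _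
        rw [← mul_assoc, hq]
        have hδ2' : (0:ℝ) ≤ δ ^ 2 := sq_nonneg _
        linarith [hδ2']
end

section
/- Let H be a Hilbert space, T : H → H* a bounded bijective operator, and C : H → H* a bounded operator such that T − C is coercive with constant c > 0. Suppose u, u_V ∈ H satisfy the Galerkin orthogonality ⟨T(u − u_V), w⟩ = 0 for all w in a closed subspace V ⊆ H, with u_V ∈ V. Then c ‖u − u_V‖ ≤ ‖T(u − u_V)‖ + ‖T(u − u_V)‖ · sup_{‖ψ‖≤1} inf_{ξ∈V} ‖(C∘T⁻¹)'ψ − ξ‖. -/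
open NormedSpace

/-- Duality/compactness estimate: with `T` bijective, `T − C` coercive, and
Galerkin orthogonality on a closed subspace `V`,
`c‖u−u_V‖ ≤ ‖T(u−u_V)‖ + ‖T(u−u_V)‖ · sup_{‖ψ‖≤1} inf_{ξ∈V} ‖(C∘T⁻¹)'ψ − ξ‖`,
where `D` realizes the dual operator `(C ∘ T⁻¹)'`. -/
theorem duality_compactness_estimate
    {H : Type*} [NormedAddCommGroup H] [InnerProductSpace ℂ H] [CompleteSpace H]
    (T C : H →L[ℂ] StrongDual ℂ H)
    (Tinv : StrongDual ℂ H →L[ℂ] H)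
    (hTr : ∀ u : StrongDual ℂ H, T (Tinv u) = u) (hTl : ∀ v : H, Tinv (T v) = v)
    (c : ℝ) (hc : 0 < c)
    (hcoer : ∀ v : H, c * ‖v‖ ^ 2 ≤ ((T - C) v v).re)
    (V : Submodule ℂ H) (hV : IsClosed (V : Set H))
    (D : H →L[ℂ] H)
    (hD : ∀ (x : H) (g : StrongDual ℂ H), g (D x) = (C.comp Tinv) g x)
    (u uV : H) (huV : uV ∈ V)
    (hgal : ∀ w ∈ V, T (u - uV) w = 0) :
    c * ‖u - uV‖ ≤ ‖T (u - uV)‖ +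
      ‖T (u - uV)‖ *
        ⨆ ψ : {x : H // ‖x‖ ≤ 1}, Metric.infDist (D ψ.1) (V : Set H) := by
  set e := u - uV with he
  by_cases h0 : e = 0
  · simp [h0]
  have hne : (0:ℝ) < ‖e‖ := norm_pos_iff.mpr h0
  have hTe : (0:ℝ) < ‖T e‖ := by
    rcases eq_or_lt_of_le (norm_nonneg (T e)) with h | h
    · exfalso; apply h0
      have hT0 : T e = 0 := by rw [← norm_eq_zero]; exact h.symm
      calc e = Tinv (T e) := (hTl e).symm
        _ = 0 := by rw [hT0, map_zero]
    · exact h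
  -- unit vector
  set ψ : H := (‖e‖⁻¹ : ℂ) • e with hψ
  have hψn : ‖ψ‖ ≤ 1 := by
    simp [hψ, norm_smul, inv_mul_cancel₀ hne.ne']
  have hDψ : D e = (‖e‖ : ℂ) • D ψ := by
    simp [hψ, map_smul, smul_smul, mul_inv_cancel₀ (by exact_mod_cast hne.ne' : (‖e‖:ℂ) ≠ 0)]
  have hVne : (V : Set H).Nonempty := ⟨0, V.zero_mem⟩
  -- key claim
  have key0 : ∀ ξ ∈ V, ‖(C e) e‖ ≤ ‖T e‖ * ‖e‖ * ‖D ψ - ξ‖ := by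
    intro ξ hξ
    have hceq : (C e) e = (T e) (D e - (‖e‖ : ℂ) • ξ) := by
      have h1 : (C e) e = (T e) (D e) := by
        have := hD e (T e)
        simp [ContinuousLinearMap.comp_apply, hTl e] at this
        exact this.symm
      have h2 : (T e) ((‖e‖ : ℂ) • ξ) = 0 := hgal _ (V.smul_mem _ hξ)
      rw [map_sub (T e), h2, sub_zero, h1]
    calc ‖(C e) e‖ = ‖(T e) (D e - (‖e‖ : ℂ) • ξ)‖ := by
          rw [hceq]
      _ ≤ ‖T e‖ * ‖D e - (‖e‖ : ℂ) • ξ‖ := (T e).le_opNorm _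
      _ = ‖T e‖ * (‖e‖ * ‖D ψ - ξ‖) := by
          rw [hDψ, ← smul_sub, norm_smul]
          simp
      _ = ‖T e‖ * ‖e‖ * ‖D ψ - ξ‖ := by ring
  have key : ‖(C e) e‖ ≤ ‖T e‖ * ‖e‖ * Metric.infDist (D ψ) (V : Set H) := by
    refine le_of_not_gt fun hlt => ?_
    have hlt' : Metric.infDist (D ψ) (V : Set H) < ‖(C e) e‖ / (‖T e‖ * ‖e‖) := by
      rw [lt_div_iff₀ (by positivity)]
      nlinarith
    obtain ⟨ξ, hξ, hdξ⟩ := (Metric.infDist_lt_iff hVne).mp hlt'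
    rw [dist_eq_norm, lt_div_iff₀ (by positivity)] at hdξ
    have := key0 ξ hξ
    nlinarith
  -- sup bound
  have hbdd : BddAbove (Set.range fun ψ' : {x : H // ‖x‖ ≤ 1} => Metric.infDist (D ψ'.1) (V : Set H)) := by
    refine ⟨‖D‖, ?_⟩
    rintro _ ⟨ψ', rfl⟩
    calc Metric.infDist (D ψ'.1) (V : Set H) ≤ dist (D ψ'.1) 0 :=
          Metric.infDist_le_dist_of_mem V.zero_mem
      _ = ‖D ψ'.1‖ := by simp
      _ ≤ ‖D‖ * ‖ψ'.1‖ := D.le_opNorm _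
      _ ≤ ‖D‖ * 1 := by gcongr; exact ψ'.2
      _ = ‖D‖ := mul_one _
  have hsup : Metric.infDist (D ψ) (V : Set H) ≤
      ⨆ ψ' : {x : H // ‖x‖ ≤ 1}, Metric.infDist (D ψ'.1) (V : Set H) :=
    le_ciSup hbdd ⟨ψ, hψn⟩
  -- main estimate
  have hmain : c * ‖e‖ ^ 2 ≤ ‖T e‖ * ‖e‖ + ‖T e‖ * ‖e‖ *
      (⨆ ψ' : {x : H // ‖x‖ ≤ 1}, Metric.infDist (D ψ'.1) (V : Set H)) := by
    have h1 := hcoer e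
    have h2 : ((T - C) e e).re = ((T e) e).re - ((C e) e).re := by
      simp [ContinuousLinearMap.sub_apply]
    have h3 : ((T e) e).re ≤ ‖T e‖ * ‖e‖ := by
      calc ((T e) e).re ≤ ‖(T e) e‖ := Complex.re_le_norm _
        _ = ‖(T e) e‖ := rfl
        _ ≤ ‖T e‖ * ‖e‖ := (T e).le_opNorm _
    have h4 : -((C e) e).re ≤ ‖(C e) e‖ :=
      (neg_le_abs _).trans (Complex.abs_re_le_norm _)
    have h5 : ‖(C e) e‖ ≤ ‖T e‖ * ‖e‖ *
        (⨆ ψ' : {x : H // ‖x‖ ≤ 1}, Metric.infDist (D ψ'.1) (V : Set H)) :=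
      key.trans (mul_le_mul_of_nonneg_left hsup (by positivity))
    nlinarith
  nlinarith [hmain, hne, hTe]
end

section
/- Let (T_ℓ)_{ℓ∈ℕ₀} be a sequence of finite sets (triangulations) with T_{ℓ+1} obtained from T_ℓ by refining a marked subset M_ℓ ⊆ T_ℓ, satisfying the closure estimate #T_ℓ − #T₀ ≤ C_clo ∑_{j=0}^{ℓ−1} #M_j for all ℓ ≥ 1. Suppose in addition #M_j ≤ C (a_j)^{-1/s} for all j, where (a_j) is a positive sequence satisfying a_{j+m} ≤ C_lin ρ_lin^m a_j with 0 < ρ_lin < 1. Then there is a constant C' such that a_ℓ ≤ C' (#T_ℓ − #T₀ + 1)^{-s} for all ℓ. -/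
/-- Rate-optimality counting argument: mesh-closure estimate, marking
cardinality bound and linear convergence imply the optimal algebraic rate. -/
theorem optimal_rate_counting
    (N M : ℕ → ℕ) (a : ℕ → ℝ)
    (Cclo C Clin ρ s : ℝ)
    (hCclo : 0 < Cclo) (hC : 0 < C) (hClin : 1 ≤ Clin)
    (hρ0 : 0 < ρ) (hρ1 : ρ < 1) (hs : 0 < s)
    (ha : ∀ j, 0 < a j)
    (hmonoN : Monotone N)
    (hclo : ∀ ℓ : ℕ, 1 ≤ ℓ →
      ((N ℓ : ℝ) - N 0) ≤ Cclo * ∑ j ∈ Finset.range ℓ, (M j : ℝ))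
    (hmark : ∀ j, (M j : ℝ) ≤ C * a j ^ (-(1 / s)))
    (hlin : ∀ j m : ℕ, a (j + m) ≤ Clin * ρ ^ m * a j) :
    ∃ C' : ℝ, ∀ ℓ, a ℓ ≤ C' * ((N ℓ : ℝ) - N 0 + 1) ^ (-s) := by
  have hClin0 : (0:ℝ) < Clin := lt_of_lt_of_le one_pos hClin
  set q : ℝ := ρ ^ (1 / s) with hqdef
  have hq0 : 0 < q := Real.rpow_pos_of_pos hρ0 _
  have hq1 : q < 1 := Real.rpow_lt_one hρ0.le hρ1 (by positivity)
  have h1q : 0 < 1 - q := by linarith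
  have hCl1 : 0 < Clin ^ (1 / s) := Real.rpow_pos_of_pos hClin0 _
  have hCl2 : 0 < (Clin * a 0) ^ (1 / s) :=
    Real.rpow_pos_of_pos (mul_pos hClin0 (ha 0)) _
  set K : ℝ := Cclo * C * Clin ^ (1 / s) * (1 / (1 - q)) + (Clin * a 0) ^ (1 / s)
    with hKdef
  have hK0 : 0 < K := by
    have h1 : 0 < Cclo * C * Clin ^ (1 / s) * (1 / (1 - q)) := by positivity
    exact add_pos h1 hCl2
  -- closure estimate, valid for all ℓ (trivially at 0)
  have hclo' : ∀ ℓ, ((N ℓ : ℝ) - N 0) ≤ Cclo * ∑ j ∈ Finset.range ℓ, (M j : ℝ) := by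
    intro ℓ
    rcases Nat.eq_zero_or_pos ℓ with h | h
    · simp [h]
    · exact hclo ℓ h
  -- comparison of the weights a_j^{-1/s} via linear convergence
  have key : ∀ ℓ j : ℕ, j ≤ ℓ →
      a j ^ (-(1 / s)) ≤ Clin ^ (1 / s) * q ^ (ℓ - j) * a ℓ ^ (-(1 / s)) := by
    intro ℓ j hj
    have hl := hlin j (ℓ - j)
    rw [Nat.add_sub_cancel' hj] at hl
    have hden : (0:ℝ) < Clin * ρ ^ (ℓ - j) := by positivity
    have hd : a ℓ / (Clin * ρ ^ (ℓ - j)) ≤ a j := by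
      rw [div_le_iff₀ hden]
      nlinarith
    have hdp : (0:ℝ) < a ℓ / (Clin * ρ ^ (ℓ - j)) := div_pos (ha ℓ) hden
    have h2 := Real.rpow_le_rpow_of_nonpos hdp hd
      (neg_nonpos.mpr (by positivity : (0:ℝ) ≤ 1 / s))
    refine h2.trans_eq ?_
    have hpm : (ρ ^ (ℓ - j) : ℝ) ^ (1 / s) = q ^ (ℓ - j) := by
      rw [← Real.rpow_natCast ρ (ℓ - j), ← Real.rpow_mul hρ0.le, mul_comm,
        Real.rpow_mul hρ0.le, Real.rpow_natCast]
    rw [Real.rpow_neg hdp.le, ← Real.inv_rpow hdp.le, inv_div,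
      Real.div_rpow hden.le (ha ℓ).le,
      Real.mul_rpow hClin0.le (by positivity), hpm,
      Real.rpow_neg (ha ℓ).le]
    ring
  -- geometric sum estimate
  have hsum : ∀ ℓ, ∑ j ∈ Finset.range ℓ, (M j : ℝ)
      ≤ C * Clin ^ (1 / s) * (1 / (1 - q)) * a ℓ ^ (-(1 / s)) := by
    intro ℓ
    have haℓ : 0 < a ℓ ^ (-(1 / s)) := Real.rpow_pos_of_pos (ha ℓ) _
    have h1 : ∑ j ∈ Finset.range ℓ, (M j : ℝ)
        ≤ ∑ j ∈ Finset.range ℓ, C * (Clin ^ (1 / s) * q ^ (ℓ - j) * a ℓ ^ (-(1 / s))) := by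
      refine Finset.sum_le_sum fun j hj => ?_
      exact (hmark j).trans (mul_le_mul_of_nonneg_left
        (key ℓ j (Finset.mem_range.mp hj).le) hC.le)
    have hgeom : ∑ j ∈ Finset.range ℓ, q ^ (ℓ - j) ≤ 1 / (1 - q) := by
      have hre : ∑ j ∈ Finset.range ℓ, q ^ (ℓ - j)
          = ∑ j ∈ Finset.range ℓ, q ^ (j + 1) := by
        rw [← Finset.sum_range_reflect (fun j => q ^ (j + 1)) ℓ]
        refine Finset.sum_congr rfl fun j hj => ?_
        congr 1
        have := Finset.mem_range.mp hj
        omega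
      have hle : ∑ j ∈ Finset.range ℓ, q ^ (j + 1)
          ≤ ∑ j ∈ Finset.range ℓ, q ^ j :=
        Finset.sum_le_sum fun j _ =>
          pow_le_pow_of_le_one hq0.le hq1.le (Nat.le_succ j)
      have hsg : (∑ j ∈ Finset.range ℓ, q ^ j) * (1 - q) = 1 - q ^ ℓ := by
        linear_combination -geom_sum_mul q ℓ
      have hgs : ∑ j ∈ Finset.range ℓ, q ^ j ≤ 1 / (1 - q) := by
        rw [le_div_iff₀ h1q]
        nlinarith [pow_nonneg hq0.le ℓ]
      rw [hre]
      exact hle.trans hgs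
    calc ∑ j ∈ Finset.range ℓ, (M j : ℝ)
        ≤ ∑ j ∈ Finset.range ℓ, C * (Clin ^ (1 / s) * q ^ (ℓ - j) * a ℓ ^ (-(1 / s))) := h1
      _ = C * Clin ^ (1 / s) * a ℓ ^ (-(1 / s)) * ∑ j ∈ Finset.range ℓ, q ^ (ℓ - j) := by
          rw [Finset.mul_sum]
          exact Finset.sum_congr rfl fun j _ => by ring
      _ ≤ C * Clin ^ (1 / s) * a ℓ ^ (-(1 / s)) * (1 / (1 - q)) :=
          mul_le_mul_of_nonneg_left hgeom (by positivity)
      _ = C * Clin ^ (1 / s) * (1 / (1 - q)) * a ℓ ^ (-(1 / s)) := by ring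
  -- the "+1" term
  have hone : ∀ ℓ, (1 : ℝ) ≤ (Clin * a 0) ^ (1 / s) * a ℓ ^ (-(1 / s)) := by
    intro ℓ
    have hl := hlin 0 ℓ
    rw [Nat.zero_add] at hl
    have hρl : ρ ^ ℓ ≤ 1 := pow_le_one₀ hρ0.le hρ1.le
    have h1 : a ℓ ≤ Clin * a 0 := by
      have := mul_le_mul_of_nonneg_right
        (mul_le_of_le_one_right hClin0.le hρl) (ha 0).le
      linarith
    have h2 : (Clin * a 0) ^ (-(1 / s)) ≤ a ℓ ^ (-(1 / s)) :=
      Real.rpow_le_rpow_of_nonpos (ha ℓ) h1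
        (neg_nonpos.mpr (by positivity : (0:ℝ) ≤ 1 / s))
    calc (1 : ℝ) = (Clin * a 0) ^ (1 / s) * (Clin * a 0) ^ (-(1 / s)) := by
          rw [← Real.rpow_add (mul_pos hClin0 (ha 0)), add_neg_cancel, Real.rpow_zero]
      _ ≤ (Clin * a 0) ^ (1 / s) * a ℓ ^ (-(1 / s)) :=
          mul_le_mul_of_nonneg_left h2 hCl2.le
  refine ⟨K ^ s, fun ℓ => ?_⟩
  set x : ℝ := (N ℓ : ℝ) - N 0 + 1 with hxdef
  have hx1 : (1 : ℝ) ≤ x := by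
    have : (N 0 : ℝ) ≤ N ℓ := Nat.cast_le.mpr (hmonoN (Nat.zero_le ℓ))
    simp only [hxdef]; linarith
  have hx0 : 0 < x := lt_of_lt_of_le one_pos hx1
  have hA : 0 < a ℓ ^ (-(1 / s)) := Real.rpow_pos_of_pos (ha ℓ) _
  have hx : x ≤ K * a ℓ ^ (-(1 / s)) := by
    have h1 := (hclo' ℓ).trans (mul_le_mul_of_nonneg_left (hsum ℓ) hCclo.le)
    have h2 := hone ℓ
    have : x ≤ Cclo * (C * Clin ^ (1 / s) * (1 / (1 - q)) * a ℓ ^ (-(1 / s)))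
        + (Clin * a 0) ^ (1 / s) * a ℓ ^ (-(1 / s)) := by
      simp only [hxdef]; linarith
    refine this.trans_eq ?_
    rw [hKdef]; ring
  -- raise to the power s
  have hxs : x ^ s ≤ K ^ s * (a ℓ)⁻¹ := by
    have h1 := Real.rpow_le_rpow hx0.le hx hs.le
    rwa [Real.mul_rpow hK0.le hA.le, ← Real.rpow_mul (ha ℓ).le,
      show -(1 / s) * s = -1 by field_simp, Real.rpow_neg_one] at h1
  have hfin : a ℓ * x ^ s ≤ K ^ s := by
    have := mul_le_mul_of_nonneg_left hxs (ha ℓ).le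
    calc a ℓ * x ^ s ≤ a ℓ * (K ^ s * (a ℓ)⁻¹) := this
      _ = K ^ s := by
          rw [mul_comm, mul_assoc, inv_mul_cancel₀ (ha ℓ).ne', mul_one]
  rw [Real.rpow_neg hx0.le, ← div_eq_mul_inv, le_div_iff₀ (Real.rpow_pos_of_pos hx0 s)]
  exact hfin
end
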